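/- arXiv:1108.5309 — 5 statements merged into one kernel-verified Lean document; each statement's English description precedes it below -/
import Mathlib

section
/- Let x, y ∈ ℝ³ be linearly independent vectors such that the restriction of B to span{x, y} is positive definite. Then there exists exactly one vector z ∈ ℝ³ with Q(z) = −1, z₃ > 0, and B(z, x) = B(z, y) = 0. (Geometrically: the geodesics D_x and D_y in the hyperbolic plane, realized as the hyperboloid sheet {z : Q(z) = −1, z₃ > 0}, intersect in a single point.) -/
/-!
The Minkowski cross product `w` of `x` and `y` is `B`-orthogonal to both, and a Lagrange
identity gives `Q(w) = -(Q(x)Q(y) - B(x,y)²) < 0`, so `w` is timelike. Since `w₃ ≠ 0`, the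
`B`-orthogonal complement of `{x, y}` is exactly the line `ℝ w`, and a timelike line meets the
upper sheet of the hyperboloid `Q = -1` in exactly one point.
-/

noncomputable section

/-- The Minkowski bilinear form of signature (2,1) on ℝ³. -/
def MinkB (u v : Fin 3 → ℝ) : ℝ := u 0 * v 0 + u 1 * v 1 - u 2 * v 2

/-- The Minkowski quadratic form `Q(v) = B(v,v)`. -/
def MinkQ (v : Fin 3 → ℝ) : ℝ := MinkB v v

/-- The cross product adapted to `MinkB`: the Euclidean cross product with its last
coordinate negated. -/
def minkCross (x y : Fin 3 → ℝ) : Fin 3 → ℝ :=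
  ![x 1 * y 2 - x 2 * y 1, x 2 * y 0 - x 0 * y 2, x 1 * y 0 - x 0 * y 1]

theorem minkB_smul_left (c : ℝ) (u v : Fin 3 → ℝ) : MinkB (c • u) v = c * MinkB u v := by
  simp only [MinkB, Pi.smul_apply, smul_eq_mul]
  ring

theorem minkQ_smul (c : ℝ) (v : Fin 3 → ℝ) : MinkQ (c • v) = c ^ 2 * MinkQ v := by
  simp only [MinkQ, MinkB, Pi.smul_apply, smul_eq_mul]
  ring

theorem minkB_minkCross_left (x y : Fin 3 → ℝ) : MinkB (minkCross x y) x = 0 := by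
  simp only [MinkB, minkCross, Matrix.cons_val]
  ring

theorem minkB_minkCross_right (x y : Fin 3 → ℝ) : MinkB (minkCross x y) y = 0 := by
  simp only [MinkB, minkCross, Matrix.cons_val]
  ring

theorem minkQ_minkCross (x y : Fin 3 → ℝ) :
    MinkQ (minkCross x y) = -(MinkQ x * MinkQ y - MinkB x y ^ 2) := by
  simp only [MinkQ, MinkB, minkCross, Matrix.cons_val]
  ring

theorem apply_two_ne_zero_of_minkQ_neg {v : Fin 3 → ℝ} (hv : MinkQ v < 0) : v 2 ≠ 0 := by
  intro h
  simp only [MinkQ, MinkB, h] at hv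
  nlinarith [sq_nonneg (v 0), sq_nonneg (v 1)]

theorem minkCross_two_smul_of_minkB_eq_zero {x y z : Fin 3 → ℝ}
    (hzx : MinkB z x = 0) (hzy : MinkB z y = 0) :
    minkCross x y 2 • z = z 2 • minkCross x y := by
  simp only [MinkB] at hzx hzy
  funext i
  fin_cases i
  · show (x 1 * y 0 - x 0 * y 1) * z 0 = z 2 * (x 1 * y 2 - x 2 * y 1)
    linear_combination x 1 * hzy - y 1 * hzx
  · show (x 1 * y 0 - x 0 * y 1) * z 1 = z 2 * (x 2 * y 0 - x 0 * y 2)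
    linear_combination y 0 * hzx - x 0 * hzy
  · exact mul_comm _ _

theorem minkB_eq_zero_and_minkB_eq_zero_iff_mem_span_minkCross {x y z : Fin 3 → ℝ}
    (hw : minkCross x y 2 ≠ 0) :
    MinkB z x = 0 ∧ MinkB z y = 0 ↔ z ∈ ℝ ∙ minkCross x y := by
  rw [Submodule.mem_span_singleton]
  constructor
  · rintro ⟨hzx, hzy⟩
    refine ⟨(minkCross x y 2)⁻¹ * z 2, ?_⟩
    rw [mul_smul, ← minkCross_two_smul_of_minkB_eq_zero hzx hzy, inv_smul_smul₀ hw]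
  · rintro ⟨c, rfl⟩
    simp only [minkB_smul_left, minkB_minkCross_left, minkB_minkCross_right, mul_zero,
      and_self]

theorem eq_of_minkQ_smul_eq_neg_one {v : Fin 3 → ℝ} {c d : ℝ}
    (hc : MinkQ (c • v) = -1) (hd : MinkQ (d • v) = -1)
    (hc2 : 0 < c * v 2) (hd2 : 0 < d * v 2) : c = d := by
  rw [minkQ_smul] at hc hd
  have hsq : c ^ 2 = d ^ 2 := by
    have hv : MinkQ v ≠ 0 := by intro h; simp [h] at hc
    exact mul_right_cancel₀ hv (hc.trans hd.symm)
  rcases sq_eq_sq_iff_eq_or_eq_neg.mp hsq with h | rfl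
  · exact h
  · nlinarith

theorem existsUnique_minkQ_eq_neg_one_mem_span {v : Fin 3 → ℝ} (hv : MinkQ v < 0) :
    ∃! z : Fin 3 → ℝ, MinkQ z = -1 ∧ 0 < z 2 ∧ z ∈ ℝ ∙ v := by
  have hv2 := apply_two_ne_zero_of_minkQ_neg hv
  set r := Real.sqrt (-MinkQ v)
  have hr : 0 < r := Real.sqrt_pos.mpr (neg_pos.mpr hv)
  have hr2 : r ^ 2 = -MinkQ v := Real.sq_sqrt (neg_pos.mpr hv).le
  -- the scalar `±1/r`, with the sign of `v 2`
  set c := |v 2| / (v 2 * r) with hc_def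
  have hc2 : 0 < c * v 2 := by
    rw [show c * v 2 = |v 2| / r by rw [hc_def]; field_simp]
    positivity
  have hc : MinkQ (c • v) = -1 := by
    rw [minkQ_smul, div_pow, mul_pow, sq_abs, hr2]
    field_simp [hv.ne]
  refine ⟨c • v, ⟨hc, hc2, Submodule.smul_mem _ _ (Submodule.mem_span_singleton_self v)⟩, ?_⟩
  rintro z ⟨hz, hz2, hzv⟩
  obtain ⟨d, rfl⟩ := Submodule.mem_span_singleton.mp hzv
  rw [eq_of_minkQ_smul_eq_neg_one hz hc hz2 hc2]

theorem geodesics_intersect_in_unique_point_general (x y : Fin 3 → ℝ)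
    (hgram : 0 < MinkQ x * MinkQ y - MinkB x y ^ 2) :
    ∃! z : Fin 3 → ℝ, MinkQ z = -1 ∧ 0 < z 2 ∧ MinkB z x = 0 ∧ MinkB z y = 0 := by
  have hw : MinkQ (minkCross x y) < 0 := by
    rw [minkQ_minkCross]
    exact neg_neg_of_pos hgram
  have hw2 := apply_two_ne_zero_of_minkQ_neg hw
  convert existsUnique_minkQ_eq_neg_one_mem_span hw using 4 with z
  exact minkB_eq_zero_and_minkB_eq_zero_iff_mem_span_minkCross hw2

/-- Let `x, y ∈ ℝ³` be linearly independent with the restriction of the Minkowski form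
to their span positive definite (equivalently `Q(x) > 0` and `Q(x)Q(y) − B(x,y)² > 0`).
Then there is exactly one vector `z` with `Q(z) = −1`, `z₃ > 0`, and
`B(z,x) = B(z,y) = 0`: the geodesics `D_x` and `D_y` on the hyperboloid sheet
`{z : Q(z) = −1, z₃ > 0}` intersect in a single point. -/
theorem geodesics_intersect_in_unique_point (x y : Fin 3 → ℝ)
    (hli : LinearIndependent ℝ ![x, y])
    (hx : 0 < MinkQ x) (hgram : 0 < MinkQ x * MinkQ y - MinkB x y ^ 2) :
    ∃! z : Fin 3 → ℝ, MinkQ z = -1 ∧ 0 < z 2 ∧ MinkB z x = 0 ∧ MinkB z y = 0 :=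
  geodesics_intersect_in_unique_point_general x y hgram
end
end

section
/- Let n ∈ ℕ, M ∈ ℝ with M ≠ 0, r ∈ ℝ, and let p ∈ P_n(ℝ) be a homogeneous polynomial of degree n whose coefficient of Y^n is zero. Then there exists a unique homogeneous polynomial w ∈ P_n(ℝ) of degree n such that w(X, Y − M·X) − w(X, Y) = p(X, Y) and ∫_r^{r+M} w(1, t) dt = 0. (This is the normalized solution of the jump equation (γ⁻¹ − Id)w = v used to construct the caps of the spectacle cycles: the solution is unique up to a multiple of the highest weight vector X^n, and the vanishing of the integral — the period of the canonical generator ω_{ℓ,k} of the boundary cohomology over the lens — fixes that multiple.) -/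
/-!
Dehomogenizing at `X = 1` identifies binary forms of degree `n` with polynomials of degree
at most `n`, turns `w(X, Y - MX)` into the translate `f(t - M)` of `f(t) = w(1, t)`, and turns
the vanishing of the `Yⁿ`-coefficient of a form into degree `< n`. The linear map
`f ↦ (f(t - M) - f(t), ∫ₐᵇ f)` from polynomials of degree `≤ n` to
(polynomials of degree `< n`) × `ℝ` is injective: a polynomial invariant under a nonzero
translation takes one value at infinitely many points, so it is constant, and a constant with
vanishing integral is zero. Both spaces have dimension `n + 1`, so the map is bijective.
-/

noncomputable section

open MvPolynomial

/-- The substitution map `p(X,Y) ↦ p(X, Y − M·X)`, the action of the unipotent matrix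
`[[1,−M],[0,1]] ∈ SL₂(ℝ)` on binary forms (variable `0` is `X`, variable `1` is `Y`). -/
def sigmaSubNeg (M : ℝ) : MvPolynomial (Fin 2) ℝ →ₐ[ℝ] MvPolynomial (Fin 2) ℝ :=
  aeval ![X 0, X 1 - C M * X 0]

namespace Polynomial

theorem finrank_degreeLT (R : Type*) [CommRing R] [StrongRankCondition R] (n : ℕ) :
    Module.finrank R (degreeLT R n) = n := by
  simp [(degreeLTEquiv R n).finrank_eq]

theorem taylor_sub_self_mem_degreeLT {R : Type*} [CommRing R] {s : R} {f : R[X]} {n : ℕ}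
    (hf : f ∈ degreeLT R (n + 1)) : taylor s f - f ∈ degreeLT R n := by
  rw [mem_degreeLT] at hf ⊢
  rcases eq_or_ne f 0 with rfl | hf0
  · simp
  calc (taylor s f - f).degree < (taylor s f).degree :=
        degree_sub_lt_left (degree_taylor f s) (by rwa [Ne, taylor_eq_zero])
          (leadingCoeff_taylor s f)
    _ = f.degree := degree_taylor f s
    _ ≤ n := Order.le_of_lt_succ (by exact_mod_cast hf)

theorem eq_C_eval_zero_of_taylor_eq_self {R : Type*} [CommRing R] [IsDomain R] [CharZero R]
    {s : R} {f : R[X]} (hs : s ≠ 0) (h : taylor s f = f) : f = C (f.eval 0) := by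
  have hperiodic : ∀ k : ℕ, f.eval (k * s) = f.eval 0 := by
    intro k
    induction k with
    | zero => simp
    | succ k ih => rw [Nat.cast_succ, add_one_mul, ← taylor_eval, h, ih]
  rw [← sub_eq_zero]
  refine eq_zero_of_infinite_isRoot _ (Set.Infinite.mono ?_
    (Set.infinite_range_of_injective (f := fun k : ℕ => (k : R) * s) fun i j hij => ?_))
  · rintro _ ⟨k, rfl⟩
    simp [hperiodic]
  · exact_mod_cast mul_right_cancel₀ hs hij

section Real

variable {s a b : ℝ} {f : ℝ[X]}

def intervalIntegralLM (a b : ℝ) : ℝ[X] →ₗ[ℝ] ℝ where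
  toFun f := ∫ t in a..b, f.eval t
  map_add' f g := by
    simp only [eval_add]
    exact intervalIntegral.integral_add (f.continuous.intervalIntegrable a b)
      (g.continuous.intervalIntegrable a b)
  map_smul' c f := by simp

@[simp]
theorem intervalIntegralLM_apply : intervalIntegralLM a b f = ∫ t in a..b, f.eval t := rfl

theorem eq_zero_of_taylor_eq_self (hs : s ≠ 0) (hab : a ≠ b) (h : taylor s f = f)
    (hI : intervalIntegralLM a b f = 0) : f = 0 := by
  rw [eq_C_eval_zero_of_taylor_eq_self hs h] at hI ⊢
  simp only [intervalIntegralLM_apply, eval_C, intervalIntegral.integral_const, smul_eq_mul,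
    mul_eq_zero, sub_eq_zero] at hI
  simpa [hab.symm] using hI

def taylorSubSelfProdIntervalIntegral (s a b : ℝ) (n : ℕ) :
    degreeLT ℝ (n + 1) →ₗ[ℝ] degreeLT ℝ n × ℝ :=
  (((taylor s - LinearMap.id).domRestrict _).codRestrict _ fun f =>
    taylor_sub_self_mem_degreeLT f.2).prod ((intervalIntegralLM a b).domRestrict _)

theorem taylorSubSelfProdIntervalIntegral_apply {n : ℕ} (f : degreeLT ℝ (n + 1)) :
    taylorSubSelfProdIntervalIntegral s a b n f =
      (⟨taylor s f - f, taylor_sub_self_mem_degreeLT f.2⟩, intervalIntegralLM a b f) :=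
  rfl

theorem exists_taylor_sub_self_eq (hs : s ≠ 0) (hab : a ≠ b) {n : ℕ} {g : ℝ[X]}
    (hg : g ∈ degreeLT ℝ n) :
    ∃ f ∈ degreeLT ℝ (n + 1), taylor s f - f = g ∧ intervalIntegralLM a b f = 0 := by
  have hinj : Function.Injective (taylorSubSelfProdIntervalIntegral s a b n) := by
    rw [← LinearMap.ker_eq_bot, Submodule.eq_bot_iff]
    rintro ⟨f, hf⟩ hker
    rw [LinearMap.mem_ker, taylorSubSelfProdIntervalIntegral_apply, Prod.mk_eq_zero,
      Submodule.mk_eq_zero, sub_eq_zero] at hker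
    exact Subtype.ext (eq_zero_of_taylor_eq_self hs hab hker.1 hker.2)
  obtain ⟨⟨f, hf⟩, hfg⟩ := (LinearMap.injective_iff_surjective_of_finrank_eq_finrank
    (by simp [finrank_degreeLT])).mp hinj (⟨g, hg⟩, 0)
  rw [taylorSubSelfProdIntervalIntegral_apply, Prod.mk.injEq, Subtype.mk.injEq] at hfg
  exact ⟨f, hf, hfg⟩

end Real

end Polynomial

section Dehomogenize

variable {R : Type*} [CommSemiring R] {w : MvPolynomial (Fin 2) R} {f : Polynomial R} {n : ℕ}

def dehomogenizeX : MvPolynomial (Fin 2) R →ₐ[R] Polynomial R := aeval ![1, Polynomial.X]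

/-- `Polynomial.homogenize` puts the variable of `f` on `X 0`; here it becomes `Y = X 1`. -/
def homogenizeX (f : Polynomial R) (n : ℕ) : MvPolynomial (Fin 2) R :=
  rename (Equiv.swap 0 1) (f.homogenize n)

theorem isHomogeneous_homogenizeX (f : Polynomial R) (n : ℕ) :
    (homogenizeX f n).IsHomogeneous n :=
  (Polynomial.isHomogeneous_homogenize f).rename_isHomogeneous

theorem rename_swap_rename_swap (w : MvPolynomial (Fin 2) R) :
    rename (Equiv.swap 0 1) (rename (Equiv.swap 0 1) w) = w := by
  rw [rename_rename]
  convert rename_id_apply w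
  funext i
  exact Equiv.swap_apply_self _ _ _

theorem dehomogenizeX_rename_swap (w : MvPolynomial (Fin 2) R) :
    dehomogenizeX (rename (Equiv.swap 0 1) w) = aeval ![Polynomial.X, 1] w := by
  rw [dehomogenizeX, aeval_rename]
  congr 2
  funext i
  fin_cases i <;> simp

theorem dehomogenizeX_homogenizeX (hf : f.natDegree ≤ n) :
    dehomogenizeX (homogenizeX f n) = f := by
  rw [homogenizeX, dehomogenizeX_rename_swap, Polynomial.aeval_homogenize_X_one f hf]

theorem homogenizeX_dehomogenizeX (hw : w.IsHomogeneous n) :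
    homogenizeX (dehomogenizeX w) n = w := by
  conv_lhs => rw [← rename_swap_rename_swap w, dehomogenizeX_rename_swap]
  rw [homogenizeX, Polynomial.homogenize_eq_of_isHomogeneous hw.rename_isHomogeneous rfl,
    rename_swap_rename_swap]

theorem dehomogenizeX_injOn :
    Set.InjOn (dehomogenizeX (R := R)) {w | w.IsHomogeneous n} := fun w hw w' hw' h => by
  rw [← homogenizeX_dehomogenizeX hw, h, homogenizeX_dehomogenizeX hw']

theorem dehomogenizeX_monomial (d : Fin 2 →₀ ℕ) (c : R) :
    dehomogenizeX (monomial d c) = Polynomial.C c * Polynomial.X ^ d 1 := by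
  simp [dehomogenizeX, aeval_monomial, Finsupp.prod_fintype, Fin.prod_univ_two]

theorem dehomogenizeX_mem_degreeLT (hw : w.IsHomogeneous n)
    (hY : w.coeff (Finsupp.single 1 n) = 0) : dehomogenizeX w ∈ Polynomial.degreeLT R n := by
  rw [w.as_sum, map_sum]
  refine Submodule.sum_mem _ fun d hd => ?_
  have hdeg : d 0 + d 1 = n := by
    simpa [Finsupp.weight_apply, Finsupp.sum_fintype, Fin.sum_univ_two] using
      hw (mem_support_iff.mp hd)
  have hlt : d 1 < n := by
    refine lt_of_le_of_ne (by omega) fun h => mem_support_iff.mp hd ?_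
    convert hY
    ext i
    fin_cases i <;> simp <;> omega
  rw [Polynomial.mem_degreeLT, dehomogenizeX_monomial]
  exact (Polynomial.degree_C_mul_X_pow_le _ _).trans_lt (by exact_mod_cast hlt)

end Dehomogenize

open Polynomial in
theorem dehomogenizeX_sigmaSubNeg (M : ℝ) (w : MvPolynomial (Fin 2) ℝ) :
    dehomogenizeX (sigmaSubNeg M w) = taylor (-M) (dehomogenizeX w) := by
  change _ = taylorAlgHom (-M) (dehomogenizeX w)
  rw [sigmaSubNeg, dehomogenizeX, comp_aeval_apply, comp_aeval_apply]
  congr 2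
  funext i
  fin_cases i <;> simp [taylor_X, sub_eq_add_neg]

theorem isHomogeneous_sigmaSubNeg {n : ℕ} {w : MvPolynomial (Fin 2) ℝ}
    (hw : w.IsHomogeneous n) (M : ℝ) : (sigmaSubNeg M w).IsHomogeneous n := by
  have hlinear : ∀ i,
      ((![X 0, X 1 - C M * X 0] : Fin 2 → MvPolynomial (Fin 2) ℝ) i).IsHomogeneous 1 :=
    Fin.forall_fin_two.mpr
      ⟨isHomogeneous_X ℝ 0, (isHomogeneous_X ℝ 1).sub ((isHomogeneous_X ℝ 0).C_mul M)⟩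
  rw [sigmaSubNeg, ← one_mul n]
  exact hw.aeval _ hlinear

theorem intervalIntegralLM_dehomogenizeX (a b : ℝ) (w : MvPolynomial (Fin 2) ℝ) :
    Polynomial.intervalIntegralLM a b (dehomogenizeX w) = ∫ t in a..b, eval ![1, t] w := by
  rw [Polynomial.intervalIntegralLM_apply]
  congr 1
  funext t
  change _ = MvPolynomial.aeval ![1, t] w
  rw [← Polynomial.coe_aeval_eq_eval, dehomogenizeX, comp_aeval_apply]
  congr 2
  funext i
  fin_cases i <;> simp

section JumpEquation

variable {M a b : ℝ} {n : ℕ}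

theorem exists_sigmaSubNeg_sub_self_eq (hM : M ≠ 0) (hab : a ≠ b)
    {p : MvPolynomial (Fin 2) ℝ} (hp : p.IsHomogeneous n)
    (hY : p.coeff (Finsupp.single 1 n) = 0) :
    ∃ w : MvPolynomial (Fin 2) ℝ, w.IsHomogeneous n ∧ sigmaSubNeg M w - w = p ∧
      ∫ t in a..b, eval ![1, t] w = 0 := by
  obtain ⟨f, hf, hjump, hperiod⟩ := Polynomial.exists_taylor_sub_self_eq (neg_ne_zero.mpr hM)
    hab (dehomogenizeX_mem_degreeLT hp hY)
  have hfn : f.natDegree ≤ n :=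
    Polynomial.natDegree_le_of_degree_le (Order.le_of_lt_succ (Polynomial.mem_degreeLT.mp hf))
  have hw := isHomogeneous_homogenizeX f n
  refine ⟨homogenizeX f n, hw, dehomogenizeX_injOn ((isHomogeneous_sigmaSubNeg hw M).sub hw) hp ?_,
    ?_⟩
  · rw [map_sub, dehomogenizeX_sigmaSubNeg, dehomogenizeX_homogenizeX hfn, hjump]
  · rwa [← intervalIntegralLM_dehomogenizeX, dehomogenizeX_homogenizeX hfn]

theorem eq_of_sigmaSubNeg_sub_self_eq (hM : M ≠ 0) (hab : a ≠ b)
    {w₁ w₂ : MvPolynomial (Fin 2) ℝ} (hw₁ : w₁.IsHomogeneous n) (hw₂ : w₂.IsHomogeneous n)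
    (hjump : sigmaSubNeg M w₁ - w₁ = sigmaSubNeg M w₂ - w₂)
    (hperiod : ∫ t in a..b, eval ![1, t] w₁ = ∫ t in a..b, eval ![1, t] w₂) : w₁ = w₂ := by
  refine dehomogenizeX_injOn hw₁ hw₂ (sub_eq_zero.mp ?_)
  refine Polynomial.eq_zero_of_taylor_eq_self (neg_ne_zero.mpr hM) hab ?_ ?_
  · rw [map_sub, ← dehomogenizeX_sigmaSubNeg, ← dehomogenizeX_sigmaSubNeg,
      sub_eq_sub_iff_sub_eq_sub, ← map_sub, ← map_sub, hjump]
  · rw [map_sub, intervalIntegralLM_dehomogenizeX, intervalIntegralLM_dehomogenizeX, hperiod,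
      sub_self]

end JumpEquation

/-- Normalized solution of the jump equation: if `p` is homogeneous of degree `n` with
vanishing coefficient of `Y^n` and `M ≠ 0`, then there is a unique homogeneous `w` of
degree `n` with `w(X, Y − MX) − w(X,Y) = p(X,Y)` and `∫_r^{r+M} w(1,t) dt = 0`.
The solution is unique up to a multiple of `X^n`; the vanishing of the period over the
lens fixes that multiple. -/
theorem normalized_jump_solution_exists_unique (n : ℕ) (M r : ℝ) (hM : M ≠ 0)
    (p : MvPolynomial (Fin 2) ℝ) (hp : p.IsHomogeneous n)
    (hcoeff : MvPolynomial.coeff (Finsupp.single 1 n) p = 0) :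
    ∃! w : MvPolynomial (Fin 2) ℝ, w.IsHomogeneous n ∧
      sigmaSubNeg M w - w = p ∧
      (∫ t in r..(r + M), MvPolynomial.eval ![(1 : ℝ), t] w) = 0 := by
  have hr : r ≠ r + M := by simpa using hM
  obtain ⟨w, hw, hjump, hperiod⟩ := exists_sigmaSubNeg_sub_self_eq hM hr hp hcoeff
  exact ⟨w, ⟨hw, hjump, hperiod⟩, fun w' ⟨hw', hjump', hperiod'⟩ =>
    eq_of_sigmaSubNeg_sub_self_eq hM hr hw' hw (hjump'.trans hjump.symm)
      (hperiod'.trans hperiod.symm)⟩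
end
end

section
/- If A ∈ SL₂(ℤ) interchanges two distinct points of the projective line ℙ¹(ℚ) (i.e. A·p = q and A·q = p for distinct p, q ∈ ℙ¹(ℚ)), then A² = I or A² = −I. (Hence the setwise stabilizer in PSL₂(ℤ) of an unordered pair of distinct rational points has order at most 2, which bounds the stabilizer of a modular symbol.) -/
/-!
Pick nonzero `u ∈ p` and `v ∈ q`. Since `A` swaps the two lines, `A u ∈ ℚ v` and `A v ∈ ℚ u`, so
in the basis `(u, v)` of `ℚ²` the matrix of `A` is antidiagonal and `tr A = 0`. Cayley–Hamilton,
`A² = (tr A) A - (det A) I`, then gives `A² = -I`.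
-/

noncomputable section

def slTwoAction (A : Matrix.SpecialLinearGroup (Fin 2) ℤ) :
    (Fin 2 → ℚ) →ₗ[ℚ] (Fin 2 → ℚ) :=
  Matrix.toLin' ((A : Matrix (Fin 2) (Fin 2) ℤ).map ((↑) : ℤ → ℚ))

open Module

theorem Submodule.exists_ne_zero_eq_span_singleton_of_finrank_eq_one {K V : Type*}
    [DivisionRing K] [AddCommGroup V] [Module K V] {p : Submodule K V} (hp : finrank K p = 1) :
    ∃ u ≠ 0, p = K ∙ u := by
  have : Module.Finite K p := Module.finite_of_finrank_eq_succ hp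
  obtain ⟨u, rfl⟩ := (p.finrank_le_one_iff_isPrincipal.mp hp.le).principal
  refine ⟨u, ?_, rfl⟩
  rintro rfl
  rw [Submodule.span_zero_singleton, finrank_bot] at hp
  exact zero_ne_one hp

theorem LinearIndependent.pair_of_span_singleton_ne {K V : Type*} [DivisionRing K]
    [AddCommGroup V] [Module K V] {u v : V} (hu : u ≠ 0) (hv : v ≠ 0)
    (huv : (K ∙ u) ≠ (K ∙ v)) : LinearIndependent K ![u, v] := by
  refine linearIndependent_fin2.mpr ⟨hv, fun a hav => huv ?_⟩
  simp only [Matrix.cons_val_one, Matrix.cons_val_zero] at hav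
  have ha : a ≠ 0 := by
    rintro rfl
    exact hu (by simpa using hav.symm)
  rw [← hav, Submodule.span_singleton_smul_eq (IsUnit.mk0 a ha)]

theorem LinearMap.trace_eq_zero_of_swaps_lines {K V : Type*} [Field K] [AddCommGroup V]
    [Module K V] (hV : finrank K V = 2) (f : V →ₗ[K] V) {p q : Submodule K V} (hpq : p ≠ q)
    (hp : finrank K p = 1) (hq : finrank K q = 1) (hfp : p.map f ≤ q) (hfq : q.map f ≤ p) :
    LinearMap.trace K V f = 0 := by
  obtain ⟨u, hu, rfl⟩ := Submodule.exists_ne_zero_eq_span_singleton_of_finrank_eq_one hp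
  obtain ⟨v, hv, rfl⟩ := Submodule.exists_ne_zero_eq_span_singleton_of_finrank_eq_one hq
  obtain ⟨c, hc⟩ := Submodule.mem_span_singleton.mp
    (hfp (Submodule.mem_map_of_mem (Submodule.mem_span_singleton_self u)))
  obtain ⟨d, hd⟩ := Submodule.mem_span_singleton.mp
    (hfq (Submodule.mem_map_of_mem (Submodule.mem_span_singleton_self v)))
  have : Module.Finite K V := Module.finite_of_finrank_eq_succ hV
  have huv := LinearIndependent.pair_of_span_singleton_ne hu hv hpq
  let b := basisOfLinearIndependentOfCardEqFinrank huv (by simp [hV])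
  have hb : ⇑b = ![u, v] := coe_basisOfLinearIndependentOfCardEqFinrank huv _
  have hb0 : b 0 = u := by simp [hb]
  have hb1 : b 1 = v := by simp [hb]
  rw [← hb0, ← hb1] at hc hd
  rw [LinearMap.trace_eq_matrix_trace K b, Matrix.trace_fin_two]
  simp [LinearMap.toMatrix_apply, ← hc, ← hd]

theorem Matrix.SpecialLinearGroup.coe_sq_eq_neg_one_of_trace_eq_zero {R : Type*} [CommRing R]
    {A : Matrix.SpecialLinearGroup (Fin 2) R} (hA : (A : Matrix (Fin 2) (Fin 2) R).trace = 0) :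
    ((A ^ 2 : Matrix.SpecialLinearGroup (Fin 2) R) : Matrix (Fin 2) (Fin 2) R) = -1 := by
  have hdet := A.det_coe
  rw [Matrix.det_fin_two] at hdet
  rw [Matrix.trace_fin_two] at hA
  ext i j
  fin_cases i <;> fin_cases j <;>
    simp only [sq, Fin.zero_eta, Fin.mk_one, Fin.isValue, Matrix.SpecialLinearGroup.coe_mul,
      Matrix.mul_apply, Fin.sum_univ_two, Matrix.neg_apply, Matrix.one_apply_eq,
      Matrix.one_apply_ne zero_ne_one, Matrix.one_apply_ne one_ne_zero, neg_zero]
  · linear_combination A 0 0 * hA - hdet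
  · linear_combination A 0 1 * hA
  · linear_combination A 1 0 * hA
  · linear_combination A 1 1 * hA - hdet

theorem trace_slTwoAction (A : Matrix.SpecialLinearGroup (Fin 2) ℤ) :
    LinearMap.trace ℚ _ (slTwoAction A) = ((A : Matrix (Fin 2) (Fin 2) ℤ).trace : ℚ) := by
  simp [slTwoAction, Matrix.trace_fin_two]

/-- If `A ∈ SL₂(ℤ)` interchanges two distinct points of `ℙ¹(ℚ)` (two distinct
one-dimensional ℚ-subspaces of `ℚ²`), then `A² = I` or `A² = −I`.  Hence the setwise
stabilizer in `PSL₂(ℤ)` of an unordered pair of distinct rational cusps has order at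
most 2. -/
theorem sl2z_swapping_two_rational_points (A : Matrix.SpecialLinearGroup (Fin 2) ℤ)
    (p q : Submodule ℚ (Fin 2 → ℚ)) (hpq : p ≠ q)
    (hp1 : Module.finrank ℚ p = 1) (hq1 : Module.finrank ℚ q = 1)
    (hAp : Submodule.map (slTwoAction A) p = q)
    (hAq : Submodule.map (slTwoAction A) q = p) :
    ((A ^ 2 : Matrix.SpecialLinearGroup (Fin 2) ℤ) : Matrix (Fin 2) (Fin 2) ℤ) = 1 ∨
      ((A ^ 2 : Matrix.SpecialLinearGroup (Fin 2) ℤ) : Matrix (Fin 2) (Fin 2) ℤ) = -1 := by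
  have htrace := LinearMap.trace_eq_zero_of_swaps_lines (by simp) (slTwoAction A) hpq hp1 hq1
    hAp.le hAq.le
  rw [trace_slTwoAction, Int.cast_eq_zero] at htrace
  exact Or.inr (Matrix.SpecialLinearGroup.coe_sq_eq_neg_one_of_trace_eq_zero htrace)
end
end

section
/- For every j ∈ ℕ and every ξ ∈ ℝ: ∫_ℝ He_j(√(2π)·x)·e^{−π x²}·e^{−2π i x ξ} dx = (−i·√(2π)·ξ)^j · e^{−π ξ²}. Equivalently, in terms of the physicists' Hermite polynomial H_j, the Fourier transform of x ↦ H_j(√π x)e^{−π x²} is ξ ↦ (−2i√π ξ)^j e^{−π ξ²}. -/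
/-!
Write `c = √(2π)` and `φⱼ(y) = Heⱼ(y) e^{-y²/2}`, so that the integrand is `φⱼ(c x) e^{-2πixξ}`.
The recurrence `Heⱼ₊₁ = X Heⱼ - Heⱼ'` says exactly that `φⱼ' = -φⱼ₊₁`, and since the Fourier
transform turns differentiation into multiplication by `2πiξ`, the transform of `φⱼ₊₁(c ·)` is
`-2πiξ/c = -icξ` times that of `φⱼ(c ·)`. Induction down to the Gaussian `φ₀(c x) = e^{-πx²}`,
which is its own Fourier transform, gives the claim.
-/

open MeasureTheory Real Polynomial FourierTransform

namespace Polynomial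

noncomputable def hermiteFunction (n : ℕ) (y : ℝ) : ℝ :=
  aeval y (hermite n) * exp (-(y ^ 2 / 2))

theorem hasDerivAt_hermiteFunction (n : ℕ) (y : ℝ) :
    HasDerivAt (hermiteFunction n) (-hermiteFunction (n + 1) y) y := by
  have hexp : HasDerivAt (fun y : ℝ => exp (-(y ^ 2 / 2))) (-y * exp (-(y ^ 2 / 2))) y := by
    simpa [mul_comm] using ((hasDerivAt_pow 2 y).div_const 2).neg.exp
  unfold hermiteFunction
  refine (((hermite n).hasDerivAt_aeval y).mul hexp).congr_deriv ?_
  rw [hermite_succ, map_sub, map_mul, aeval_X]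
  ring

theorem integrable_aeval_mul_exp_neg_mul_sq {R : Type*} [CommSemiring R] [Algebra R ℝ]
    (P : R[X]) {b : ℝ} (hb : 0 < b) :
    Integrable fun x : ℝ => aeval x P * exp (-b * x ^ 2) := by
  simp_rw [aeval_eq_sum_range, Finset.sum_mul, Algebra.smul_def, mul_assoc]
  refine integrable_finsetSum _ fun i _ => .const_mul ?_ _
  simpa [rpow_natCast] using
    integrable_rpow_mul_exp_neg_mul_sq hb (neg_one_lt_zero.trans_le i.cast_nonneg)

theorem integrable_hermiteFunction (n : ℕ) : Integrable (hermiteFunction n) := by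
  unfold hermiteFunction
  convert integrable_aeval_mul_exp_neg_mul_sq (hermite n) (b := 1 / 2) (by norm_num) using 4
  ring

theorem hasDerivAt_ofReal_hermiteFunction_comp_mul (n : ℕ) (c x : ℝ) :
    HasDerivAt (fun x : ℝ => (hermiteFunction n (c * x) : ℂ))
      (-c * hermiteFunction (n + 1) (c * x)) x := by
  have hscale : HasDerivAt (fun x : ℝ => c * x) c x := by
    simpa using (hasDerivAt_id x).const_mul c
  simpa [mul_comm] using ((hasDerivAt_hermiteFunction n (c * x)).comp x hscale).ofReal_comp

theorem integrable_ofReal_hermiteFunction_comp_mul (n : ℕ) {c : ℝ} (hc : c ≠ 0) :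
    Integrable fun x : ℝ => (hermiteFunction n (c * x) : ℂ) :=
  ((integrable_hermiteFunction n).comp_mul_left' hc).ofReal

open Complex in
theorem fourier_ofReal_hermiteFunction_comp_mul_succ {c : ℝ} (hc : c ≠ 0) (n : ℕ) (ξ : ℝ) :
    𝓕 (fun x : ℝ => (hermiteFunction (n + 1) (c * x) : ℂ)) ξ =
      -(2 * π * I * ξ / c) * 𝓕 (fun x : ℝ => (hermiteFunction n (c * x) : ℂ)) ξ := by
  set g := fun x : ℝ => (hermiteFunction (n + 1) (c * x) : ℂ)
  have hderiv : deriv (fun x : ℝ => (hermiteFunction n (c * x) : ℂ)) = (-c : ℂ) • g :=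
    _root_.funext fun x => (hasDerivAt_ofReal_hermiteFunction_comp_mul n c x).deriv
  have hfourier := congr_fun (Real.fourier_deriv (integrable_ofReal_hermiteFunction_comp_mul n hc)
    (fun x => (hasDerivAt_ofReal_hermiteFunction_comp_mul n c x).differentiableAt)
    (hderiv ▸ (integrable_ofReal_hermiteFunction_comp_mul (n + 1) hc).smul (-c : ℂ))) ξ
  have hsmul : 𝓕 ((-c : ℂ) • g) = (-c : ℂ) • 𝓕 g :=
    VectorFourier.fourierIntegral_const_smul _ _ _ _ _
  rw [hderiv, hsmul] at hfourier
  simp only [Pi.smul_apply, smul_eq_mul] at hfourier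
  have hc' : (c : ℂ) ≠ 0 := ofReal_ne_zero.2 hc
  apply mul_left_cancel₀ (neg_ne_zero.2 hc')
  rw [hfourier]
  field_simp

open Complex in
theorem fourier_ofReal_hermiteFunction_comp_mul {c : ℝ} (hc : c ≠ 0) (n : ℕ) (ξ : ℝ) :
    𝓕 (fun x : ℝ => (hermiteFunction n (c * x) : ℂ)) ξ =
      (-(2 * π * I * ξ / c)) ^ n * 𝓕 (fun x : ℝ => (rexp (-((c * x) ^ 2 / 2)) : ℂ)) ξ := by
  induction n with
  | zero => simp [hermiteFunction]
  | succ n ih => rw [fourier_ofReal_hermiteFunction_comp_mul_succ hc, ih, pow_succ']; ring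

end Polynomial

/-- Fourier transform of Hermite functions: for every `j` and `ξ`,
`∫ He_j(√(2π)x)·e^{−πx²}·e^{−2πixξ} dx = (−i√(2π)ξ)^j·e^{−πξ²}`, where `He_j` is the
probabilists' Hermite polynomial. -/
theorem hermite_fourier_transform (j : ℕ) (ξ : ℝ) :
    (∫ x : ℝ,
        ((Polynomial.aeval (Real.sqrt (2 * Real.pi) * x) (Polynomial.hermite j) : ℝ) : ℂ) *
          Complex.exp (-(Real.pi : ℂ) * (x : ℂ) ^ 2) *
          Complex.exp (-2 * (Real.pi : ℂ) * Complex.I * (x : ℂ) * (ξ : ℂ))) =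
      (-Complex.I * (Real.sqrt (2 * Real.pi) : ℂ) * (ξ : ℂ)) ^ j *
        Complex.exp (-(Real.pi : ℂ) * (ξ : ℂ) ^ 2) := by
  set c := √(2 * π)
  have hc : c ≠ 0 := (sqrt_pos.2 two_pi_pos).ne'
  have hc2 : (c : ℂ) ^ 2 = 2 * π := by norm_cast; exact sq_sqrt two_pi_pos.le
  have hsq (x : ℝ) : (c * x) ^ 2 / 2 = π * x ^ 2 := by
    rw [mul_pow, sq_sqrt two_pi_pos.le]; ring
  have hgauss : 𝓕 (fun x : ℝ => (rexp (-((c * x) ^ 2 / 2)) : ℂ)) ξ = Complex.exp (-π * ξ ^ 2) := by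
    simpa [hsq] using congr_fun (fourier_gaussian_pi (b := 1) (by simp)) ξ
  have h := fourier_ofReal_hermiteFunction_comp_mul hc j ξ
  rw [hgauss, Real.fourier_real_eq_integral_exp_smul] at h
  convert h using 1
  · congr 1
    ext x
    simp only [hermiteFunction, hsq, smul_eq_mul]
    push_cast
    ring_nf
  · rw [← hc2]
    field_simp
end

section
/- For every integer k ≥ 0 and every real b ≠ 0, the integral ∫_{−∞}^{∞} He_{k+1}(b·cosh r)·exp(−(b²/2)·sinh² r)·exp(k·r) dr converges and equals √(2π)·b^k·sgn(b). Equivalently, in physicists' normalization, ∫_{−∞}^{∞} H_{k+1}(a·cosh r)·exp(−a²·sinh² r)·e^{kr} dr = 2^{k+1}·√π·a^k·sgn(a) for a ≠ 0. (This is the period of the Schwartz form φ^U_{1,[k]} over the hyperbolic line against a spacelike vector; it produces the positive Fourier coefficients of the O(1,1) theta lift.) -/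
/-!
Write `I(n, a) = ∫ He_n(b cosh r) e^{-(b²/2) sinh² r} e^{ar} dr`. Since
`2 cosh r · e^{ar} = e^{(a+1)r} + e^{(a-1)r}`, the three-term recurrence
`He_{k+2} = x He_{k+1} - (k+1) He_k` gives
`I(k+2, k+1) = (b/2) (I(k+1, k+2) + I(k+1, k)) - (k+1) I(k, k+1)`.
Differentiating `He_k(b cosh r) e^{-(b²/2) sinh² r} e^{(k+1)r}` produces
`b sinh r · He_{k+1}(b cosh r)`, because `He_{k+1} = x He_k - He_k'`, so integrating the
derivative to zero gives `(k+1) I(k, k+1) = (b/2) (I(k+1, k+2) - I(k+1, k))`.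
Hence `I(k+2, k+1) = b I(k+1, k)`, so `I(k+1, k) = b^k I(1, 0)`, and the substitution
`u = sinh r` turns `I(1, 0)` into the Gaussian integral `∫ b e^{-b²u²/2} du = √(2π) sgn b`.
All the integrands decay like Gaussians because `sinh² r ≥ r²`.
-/

open Real MeasureTheory Polynomial

namespace Polynomial

theorem derivative_hermite_succ (n : ℕ) :
    derivative (hermite (n + 1)) = (n + 1 : ℤ[X]) * hermite n := by
  induction n with
  | zero => simp
  | succ n ih =>
    rw [hermite_succ (n + 1), derivative_sub, derivative_mul, derivative_X, one_mul, ih,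
      derivative_mul, hermite_succ n]
    simp only [derivative_add, derivative_natCast, derivative_one, Nat.cast_succ]
    ring

theorem hermite_succ_succ (n : ℕ) :
    hermite (n + 2) = X * hermite (n + 1) - (n + 1 : ℤ[X]) * hermite n := by
  rw [hermite_succ (n + 1), derivative_hermite_succ]

end Polynomial

theorem cosh_mul_exp (a r : ℝ) :
    cosh r * exp (a * r) = (exp ((a + 1) * r) + exp ((a - 1) * r)) / 2 := by
  rw [cosh_eq, add_mul, sub_mul, one_mul, exp_add, exp_sub, exp_neg]
  field_simp

theorem sinh_mul_exp (a r : ℝ) :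
    sinh r * exp (a * r) = (exp ((a + 1) * r) - exp ((a - 1) * r)) / 2 := by
  rw [sinh_eq, add_mul, sub_mul, one_mul, exp_add, exp_sub, exp_neg]
  field_simp

theorem sq_le_sinh_sq (r : ℝ) : r ^ 2 ≤ sinh r ^ 2 := by
  rw [← sq_abs r, ← sq_abs (sinh r), abs_sinh]
  exact pow_le_pow_left₀ (abs_nonneg r) (self_le_sinh_iff.2 (abs_nonneg r)) 2

theorem integrable_exp_neg_sinh_sq_mul_exp {b : ℝ} (hb : b ≠ 0) (a : ℝ) :
    Integrable fun r => exp (-(b ^ 2 / 2) * sinh r ^ 2) * exp (a * r) := by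
  obtain ⟨c, rfl⟩ : ∃ c, a = c * b := ⟨a / b, (div_mul_cancel₀ a hb).symm⟩
  have hexponent (r : ℝ) :
      -(b ^ 2 / 2) * sinh r ^ 2 + c * b * r ≤ c ^ 2 + -(b ^ 2 / 4) * r ^ 2 := by
    nlinarith [sq_le_sinh_sq r, sq_nonneg (c - b * r / 2), sq_nonneg b]
  refine ((integrable_exp_neg_mul_sq (by positivity : 0 < b ^ 2 / 4)).const_mul
    (exp (c ^ 2))).mono' (by fun_prop) (ae_of_all _ fun r => ?_)
  rw [norm_of_nonneg (by positivity), ← exp_add, ← exp_add]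
  exact exp_le_exp.2 (hexponent r)

theorem integral_comp_sinh_mul_cosh (g : ℝ → ℝ) :
    ∫ r, g (sinh r) * cosh r = ∫ u, g u := by
  have h := integral_image_eq_integral_abs_deriv_smul MeasurableSet.univ
    (fun r _ => (hasDerivAt_sinh r).hasDerivWithinAt) sinh_injective.injOn g
  rw [Set.image_univ, sinh_surjective.range_eq, setIntegral_univ, setIntegral_univ] at h
  simp_rw [h, smul_eq_mul, abs_of_pos (cosh_pos _), mul_comm]

noncomputable def coshIntegrand (b : ℝ) (p : ℤ[X]) (a r : ℝ) : ℝ :=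
  aeval (b * cosh r) p * exp (-(b ^ 2 / 2) * sinh r ^ 2) * exp (a * r)

theorem coshIntegrand_X_mul (b : ℝ) (p : ℤ[X]) (a r : ℝ) :
    coshIntegrand b (X * p) a r =
      b / 2 * (coshIntegrand b p (a + 1) r + coshIntegrand b p (a - 1) r) := by
  simp only [coshIntegrand, map_mul, aeval_X]
  linear_combination b * aeval (b * cosh r) p * exp (-(b ^ 2 / 2) * sinh r ^ 2) * cosh_mul_exp a r

theorem sinh_mul_coshIntegrand (b : ℝ) (p : ℤ[X]) (a r : ℝ) :
    b * sinh r * coshIntegrand b p a r =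
      b / 2 * (coshIntegrand b p (a + 1) r - coshIntegrand b p (a - 1) r) := by
  simp only [coshIntegrand]
  linear_combination b * aeval (b * cosh r) p * exp (-(b ^ 2 / 2) * sinh r ^ 2) * sinh_mul_exp a r

theorem integrable_coshIntegrand {b : ℝ} (hb : b ≠ 0) (p : ℤ[X]) (a : ℝ) :
    Integrable (coshIntegrand b p a) := by
  induction p using Polynomial.induction_on generalizing a with
  | C c =>
    have hC : coshIntegrand b (C c) a =
        fun r => (c : ℝ) * (exp (-(b ^ 2 / 2) * sinh r ^ 2) * exp (a * r)) := by
      ext r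
      simp [coshIntegrand, mul_assoc]
    rw [hC]
    exact (integrable_exp_neg_sinh_sq_mul_exp hb a).const_mul _
  | add p q hp hq =>
    have hadd : coshIntegrand b (p + q) a = coshIntegrand b p a + coshIntegrand b q a := by
      ext r
      simp only [coshIntegrand, map_add, Pi.add_apply]
      ring
    rw [hadd]
    exact (hp a).add (hq a)
  | monomial n c h =>
    have hX : coshIntegrand b (C c * X ^ (n + 1)) a =
        fun r => b / 2 * (coshIntegrand b (C c * X ^ n) (a + 1) r +
          coshIntegrand b (C c * X ^ n) (a - 1) r) := by
      ext r
      rw [pow_succ, ← mul_assoc, mul_comm _ X, coshIntegrand_X_mul]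
    rw [hX]
    exact ((h (a + 1)).add (h (a - 1))).const_mul _

theorem hasDerivAt_coshIntegrand (b : ℝ) (p : ℤ[X]) (a r : ℝ) :
    HasDerivAt (coshIntegrand b p a)
      (a * coshIntegrand b p a r - b * sinh r * coshIntegrand b (X * p - derivative p) a r) r := by
  have hpoly : HasDerivAt (fun r => aeval (b * cosh r) p)
      (aeval (b * cosh r) (derivative p) * (b * sinh r)) r :=
    (p.hasDerivAt_aeval _).comp r ((hasDerivAt_cosh r).const_mul b)
  have hgauss : HasDerivAt (fun r => exp (-(b ^ 2 / 2) * sinh r ^ 2))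
      (exp (-(b ^ 2 / 2) * sinh r ^ 2) * (-(b ^ 2 / 2) * (2 * sinh r * cosh r))) r := by
    simpa using (((hasDerivAt_sinh r).pow 2).const_mul (-(b ^ 2 / 2))).exp
  have hexp : HasDerivAt (fun r => exp (a * r)) (exp (a * r) * a) r := by
    simpa using ((hasDerivAt_id r).const_mul a).exp
  refine ((hpoly.mul hgauss).mul hexp).congr_deriv ?_
  simp only [coshIntegrand, Pi.mul_apply, map_sub, map_mul, aeval_X]
  ring

theorem integral_coshIntegrand_by_parts {b : ℝ} (hb : b ≠ 0) (p : ℤ[X]) (a : ℝ) :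
    a * ∫ r, coshIntegrand b p a r =
      b / 2 * ((∫ r, coshIntegrand b (X * p - derivative p) (a + 1) r) -
        ∫ r, coshIntegrand b (X * p - derivative p) (a - 1) r) := by
  set q := X * p - derivative p
  have hderiv (r : ℝ) : HasDerivAt (coshIntegrand b p a)
      (a * coshIntegrand b p a r -
        b / 2 * (coshIntegrand b q (a + 1) r - coshIntegrand b q (a - 1) r)) r := by
    rw [← sinh_mul_coshIntegrand]
    exact hasDerivAt_coshIntegrand b p a r
  have hp := integrable_coshIntegrand hb p a
  have hqup := integrable_coshIntegrand hb q (a + 1)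
  have hqdown := integrable_coshIntegrand hb q (a - 1)
  have hq : Integrable fun r => coshIntegrand b q (a + 1) r - coshIntegrand b q (a - 1) r :=
    hqup.sub hqdown
  have hzero := integral_eq_zero_of_hasDerivAt_of_integrable hderiv
    ((hp.const_mul a).sub (hq.const_mul (b / 2))) hp
  rw [integral_sub (hp.const_mul a) (hq.const_mul (b / 2)), integral_const_mul,
    integral_const_mul, integral_sub hqup hqdown] at hzero
  linarith

theorem integral_coshIntegrand_hermite_succ_succ {b : ℝ} (hb : b ≠ 0) (n : ℕ) (a : ℝ) :
    ∫ r, coshIntegrand b (hermite (n + 2)) a r =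
      b / 2 * ((∫ r, coshIntegrand b (hermite (n + 1)) (a + 1) r) +
        ∫ r, coshIntegrand b (hermite (n + 1)) (a - 1) r) -
      (n + 1) * ∫ r, coshIntegrand b (hermite n) a r := by
  have hrec (r : ℝ) : coshIntegrand b (hermite (n + 2)) a r =
      b / 2 * (coshIntegrand b (hermite (n + 1)) (a + 1) r +
        coshIntegrand b (hermite (n + 1)) (a - 1) r) -
      (n + 1) * coshIntegrand b (hermite n) a r := by
    rw [← coshIntegrand_X_mul, hermite_succ_succ]
    simp only [coshIntegrand, map_sub, map_mul, map_add, map_natCast, map_one]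
    ring
  have hup := integrable_coshIntegrand hb (hermite (n + 1)) (a + 1)
  have hdown := integrable_coshIntegrand hb (hermite (n + 1)) (a - 1)
  have h := integrable_coshIntegrand hb (hermite n) a
  have hsum : Integrable fun r =>
      coshIntegrand b (hermite (n + 1)) (a + 1) r + coshIntegrand b (hermite (n + 1)) (a - 1) r :=
    hup.add hdown
  simp_rw [hrec]
  rw [integral_sub (hsum.const_mul _) (h.const_mul _), integral_const_mul,
    integral_const_mul, integral_add hup hdown]

theorem integral_coshIntegrand_hermite_succ_succ_self {b : ℝ} (hb : b ≠ 0) (k : ℕ) :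
    ∫ r, coshIntegrand b (hermite (k + 2)) (k + 1) r =
      b * ∫ r, coshIntegrand b (hermite (k + 1)) k r := by
  have hparts := integral_coshIntegrand_by_parts hb (hermite k) (k + 1)
  have hrec := integral_coshIntegrand_hermite_succ_succ hb k (k + 1)
  rw [← hermite_succ, add_sub_cancel_right] at hparts
  rw [add_sub_cancel_right] at hrec
  linear_combination hrec - hparts

theorem integral_coshIntegrand_hermite_succ_self {b : ℝ} (hb : b ≠ 0) (k : ℕ) :
    ∫ r, coshIntegrand b (hermite (k + 1)) k r =
      b ^ k * ∫ r, coshIntegrand b (hermite 1) 0 r := by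
  induction k with
  | zero => simp
  | succ k ih =>
    rw [Nat.cast_succ, integral_coshIntegrand_hermite_succ_succ_self hb k, ih, pow_succ]
    ring

theorem integral_coshIntegrand_hermite_one {b : ℝ} (hb : b ≠ 0) :
    ∫ r, coshIntegrand b (hermite 1) 0 r = √(2 * π) * sign b := by
  let g : ℝ → ℝ := fun u => b * exp (-(b ^ 2 / 2) * u ^ 2)
  calc ∫ r, coshIntegrand b (hermite 1) 0 r
        = ∫ r, g (sinh r) * cosh r := by
        congr 1 with r
        simp only [g, coshIntegrand, hermite_one, aeval_X, zero_mul, exp_zero]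
        ring
    _ = ∫ u, g u := integral_comp_sinh_mul_cosh g
    _ = b * √(2 * π) / |b| := by
        rw [integral_const_mul, integral_gaussian, div_div_eq_mul_div, mul_comm π,
          sqrt_div' _ (sq_nonneg b), sqrt_sq_eq_abs, mul_div_assoc]
    _ = √(2 * π) * sign b := by
        rcases hb.lt_or_gt with hneg | hpos
        · rw [sign_of_neg hneg, abs_of_neg hneg]
          field_simp
        · rw [sign_of_pos hpos, abs_of_pos hpos]
          field_simp

/-- Period of the Schwartz form `φ^U_{1,[k]}` over the hyperbolic line against a
spacelike vector: for every `k ≥ 0` and real `b ≠ 0`,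
`∫_{−∞}^{∞} He_{k+1}(b·cosh r)·e^{−(b²/2)·sinh²r}·e^{kr} dr = √(2π)·b^k·sgn(b)`,
where `He_n` is the probabilists' Hermite polynomial. -/
theorem hermite_cosh_integral (k : ℕ) (b : ℝ) (hb : b ≠ 0) :
    MeasureTheory.Integrable (fun r : ℝ =>
      (Polynomial.aeval (b * Real.cosh r) (Polynomial.hermite (k + 1)) : ℝ) *
        Real.exp (-(b ^ 2 / 2) * Real.sinh r ^ 2) * Real.exp (k * r)) ∧
    (∫ r : ℝ,
        (Polynomial.aeval (b * Real.cosh r) (Polynomial.hermite (k + 1)) : ℝ) *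
          Real.exp (-(b ^ 2 / 2) * Real.sinh r ^ 2) * Real.exp (k * r)) =
      Real.sqrt (2 * Real.pi) * b ^ k * Real.sign b := by
  refine ⟨integrable_coshIntegrand hb (hermite (k + 1)) k, ?_⟩
  change ∫ r, coshIntegrand b (hermite (k + 1)) k r = _
  rw [integral_coshIntegrand_hermite_succ_self hb k, integral_coshIntegrand_hermite_one hb]
  ring
end
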